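/- arXiv:1103.1768 — 7 statements merged into one kernel-verified Lean document; each statement's English description precedes it below -/
import Mathlib

section
/- Let y₁,…,y_n ∈ ℝ^m and set S := (1/n) Σ_{i=1}^n y_i y_iᵀ. Then for every (L,D) ∈ Θ_G, the product of the multivariate Gaussian densities with mean 0 and covariance LDLᵀ evaluated at y₁,…,y_n times the prior kernel equals (2π)^{−nm/2} times the posterior kernel with updated parameters; explicitly, ∏_{i=1}^n [(2π)^{−m/2} det(LDLᵀ)^{−1/2} exp(−y_iᵀ(LDLᵀ)⁻¹y_i/2)] · π̃_{U,α}(L,D) = (2π)^{−nm/2} · π̃_{nS+U, (α₁+n,…,α_m+n)}(L,D). -/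
open Matrix

/-!
Since `L` is unit lower triangular, `det (L D Lᵀ) = ∏ Dᵢᵢ`, so each Gaussian factor is
`(2π)^(-m/2) exp (-(yᵢᵀ Σ⁻¹ yᵢ + ∑ log Dᵢᵢ) / 2)`, and `yᵢᵀ Σ⁻¹ yᵢ = tr (Σ⁻¹ yᵢ yᵢᵀ)`.
The likelihood is therefore an exponential of the same linear form in `tr (Σ⁻¹ ·)` and the
`log Dᵢᵢ` as the prior kernel, and multiplying it in just shifts `U` by `∑ yᵢ yᵢᵀ` and `α` by `n`.
-/

theorem Matrix.det_mul_diagonal_mul_transpose_of_isLowerTriangular {ι R : Type*} [Fintype ι]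
    [DecidableEq ι] [LinearOrder ι] [CommRing R] {L : Matrix ι ι R}
    (hlow : L.IsLowerTriangular) (hdiag : ∀ i, L i i = 1) (d : ι → R) :
    (L * diagonal d * Lᵀ).det = ∏ i, d i := by
  have hL : L.det = 1 := by
    simp [det_of_isLowerTriangular L hlow, hdiag]
  rw [det_mul, det_mul, det_transpose, hL, det_diagonal, one_mul, mul_one]

theorem Matrix.dotProduct_mulVec_self_eq_trace_mul_vecMulVec {ι R : Type*} [Fintype ι]
    [CommSemiring R] (A : Matrix ι ι R) (v : ι → R) :
    v ⬝ᵥ (A *ᵥ v) = trace (A * vecMulVec v v) := by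
  rw [mul_vecMulVec, trace_vecMulVec, dotProduct_comm]

theorem Matrix.trace_mul_sum_vecMulVec_add {ι κ R : Type*} [Fintype ι] [Fintype κ]
    [CommSemiring R] (A U : Matrix ι ι R) (y : κ → ι → R) :
    trace (A * (∑ k, vecMulVec (y k) (y k) + U)) = ∑ k, y k ⬝ᵥ (A *ᵥ y k) + trace (A * U) := by
  simp only [Matrix.mul_add, trace_add, Finset.mul_sum, trace_sum,
    dotProduct_mulVec_self_eq_trace_mul_vecMulVec]

theorem Real.rpow_neg_half_eq_exp {x : ℝ} (hx : 0 < x) :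
    x ^ (-(1 : ℝ) / 2) = Real.exp (-Real.log x / 2) := by
  rw [Real.rpow_def_of_pos hx]
  ring_nf

theorem Real.prod_const_mul_exp {ι : Type*} (s : Finset ι) (c : ℝ) (f : ι → ℝ) :
    ∏ i ∈ s, c * Real.exp (f i) = c ^ s.card * Real.exp (∑ i ∈ s, f i) := by
  rw [Finset.prod_mul_distrib, Finset.prod_const, Real.exp_sum]

theorem Fintype.card_smul_inv_smul_sum {ι M : Type*} [Fintype ι] [AddCommGroup M] [Module ℝ M]
    (f : ι → M) :
    (Fintype.card ι : ℝ) • ((Fintype.card ι : ℝ)⁻¹ • ∑ i, f i) = ∑ i, f i := by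
  rcases isEmpty_or_nonempty ι with hι | hι
  · simp
  · rw [smul_smul, mul_inv_cancel₀ (by positivity), one_smul]

theorem stmt_2_general {m n : ℕ}
    (L : Matrix (Fin m) (Fin m) ℝ)
    (hlow : ∀ i j : Fin m, i < j → L i j = 0)
    (hdiag : ∀ i : Fin m, L i i = 1)
    (d : Fin m → ℝ) (hd : ∀ i, 0 < d i)
    (U : Matrix (Fin m) (Fin m) ℝ)
    (α : Fin m → ℝ)
    (y : Fin n → Fin m → ℝ) :
    (∏ i : Fin n,
        ((2 * Real.pi) ^ (-(m : ℝ) / 2) *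
          (L * Matrix.diagonal d * Lᵀ).det ^ (-(1 : ℝ) / 2) *
          Real.exp (-(y i ⬝ᵥ ((L * Matrix.diagonal d * Lᵀ)⁻¹ *ᵥ y i)) / 2))) *
      Real.exp (-(Matrix.trace ((L * Matrix.diagonal d * Lᵀ)⁻¹ * U) +
          ∑ i : Fin m, α i * Real.log (d i)) / 2)
    = (2 * Real.pi) ^ (-((n : ℝ) * (m : ℝ)) / 2) *
      Real.exp (-(Matrix.trace ((L * Matrix.diagonal d * Lᵀ)⁻¹ *
            ((n : ℝ) • ((n : ℝ)⁻¹ • ∑ i : Fin n, vecMulVec (y i) (y i)) + U)) +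
          ∑ i : Fin m, (α i + (n : ℝ)) * Real.log (d i)) / 2) := by
  set A := (L * diagonal d * Lᵀ)⁻¹
  have hdet : (L * diagonal d * Lᵀ).det = ∏ i, d i :=
    det_mul_diagonal_mul_transpose_of_isLowerTriangular (fun i j h => hlow i j h) hdiag d
  have hlogdet : Real.log (∏ i, d i) = ∑ i, Real.log (d i) :=
    Real.log_prod fun i _ => (hd i).ne'
  have hfactor : ∀ k : Fin n, (2 * Real.pi) ^ (-(m : ℝ) / 2) *
      (L * diagonal d * Lᵀ).det ^ (-(1 : ℝ) / 2) * Real.exp (-(y k ⬝ᵥ (A *ᵥ y k)) / 2) =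
      (2 * Real.pi) ^ (-(m : ℝ) / 2) *
        Real.exp (-(y k ⬝ᵥ (A *ᵥ y k) + ∑ i, Real.log (d i)) / 2) := by
    intro k
    rw [hdet, Real.rpow_neg_half_eq_exp (Finset.prod_pos fun i _ => hd i), hlogdet, mul_assoc,
      ← Real.exp_add]
    ring_nf
  have hconst : ((2 * Real.pi) ^ (-(m : ℝ) / 2)) ^ n = (2 * Real.pi) ^ (-((n : ℝ) * m) / 2) := by
    rw [← Real.rpow_natCast, ← Real.rpow_mul (by positivity)]
    ring_nf
  have hscatter := Fintype.card_smul_inv_smul_sum (fun k : Fin n => vecMulVec (y k) (y k))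
  rw [Fintype.card_fin] at hscatter
  rw [Finset.prod_congr rfl fun k _ => hfactor k, Real.prod_const_mul_exp, Finset.card_univ,
    Fintype.card_fin, hconst, hscatter, trace_mul_sum_vecMulVec_add, mul_assoc, ← Real.exp_add]
  congr 2
  simp only [add_mul, Finset.sum_add_distrib, ← Finset.mul_sum, ← Finset.sum_div,
    Finset.sum_neg_distrib, Finset.sum_const, Finset.card_univ, Fintype.card_fin, nsmul_eq_mul]
  ring

/-- conjugacy identity. For `(L, D) ∈ Θ_G`, with `Σ = L D Lᵀ`,
`S = (1/n) Σᵢ yᵢ yᵢᵀ` and prior kernel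
`π̃_{U,α}(L,D) = exp(−(tr(Σ⁻¹U) + Σᵢ αᵢ log Dᵢᵢ)/2)`, one has
`∏ᵢ [(2π)^{−m/2} det(Σ)^{−1/2} exp(−yᵢᵀΣ⁻¹yᵢ/2)] ⬝ π̃_{U,α}(L,D)
  = (2π)^{−nm/2} ⬝ π̃_{nS+U, α+n}(L,D)`. -/
theorem stmt_2 {m n : ℕ} (hm : 0 < m) (hn : 0 < n)
    (E : Finset (Fin m × Fin m))
    (hsymm : ∀ i j : Fin m, (i, j) ∈ E → (j, i) ∈ E)
    (hirr : ∀ i : Fin m, (i, i) ∉ E)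
    (L : Matrix (Fin m) (Fin m) ℝ)
    (hlow : ∀ i j : Fin m, i < j → L i j = 0)
    (hdiag : ∀ i : Fin m, L i i = 1)
    (hLG : ∀ i j : Fin m, j < i → (i, j) ∉ E → L i j = 0)
    (d : Fin m → ℝ) (hd : ∀ i, 0 < d i)
    (U : Matrix (Fin m) (Fin m) ℝ) (hU : U.PosDef)
    (α : Fin m → ℝ)
    (y : Fin n → Fin m → ℝ) :
    (∏ i : Fin n,
        ((2 * Real.pi) ^ (-(m : ℝ) / 2) *
          (L * Matrix.diagonal d * Lᵀ).det ^ (-(1 : ℝ) / 2) *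
          Real.exp (-(y i ⬝ᵥ ((L * Matrix.diagonal d * Lᵀ)⁻¹ *ᵥ y i)) / 2))) *
      Real.exp (-(Matrix.trace ((L * Matrix.diagonal d * Lᵀ)⁻¹ * U) +
          ∑ i : Fin m, α i * Real.log (d i)) / 2)
    = (2 * Real.pi) ^ (-((n : ℝ) * (m : ℝ)) / 2) *
      Real.exp (-(Matrix.trace ((L * Matrix.diagonal d * Lᵀ)⁻¹ *
            ((n : ℝ) • ((n : ℝ)⁻¹ • ∑ i : Fin n, vecMulVec (y i) (y i)) + U)) +
          ∑ i : Fin m, (α i + (n : ℝ)) * Real.log (d i)) / 2) :=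
  stmt_2_general L hlow hdiag d hd U α y
end

section
/- Let L be an m×m real unit lower-triangular matrix, D an m×m diagonal matrix with all D_{ii} > 0, U an m×m real symmetric matrix, and fix u, u′ > v. Then the mixed second partial derivative at (s,t) = (0,0) of the function h(s,t) := tr(((L + s·E_{uv} + t·E_{u′v}) D (L + s·E_{uv} + t·E_{u′v})ᵀ)⁻¹ U) equals 2 (L⁻¹ U (Lᵀ)⁻¹)_{vv} · ((LDLᵀ)⁻¹)_{uu′}. -/
/-!
Since `L⁻¹` is lower triangular and `u, u' > v`, the perturbation `N = s E_{uv} + t E_{u'v}`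
satisfies `N L⁻¹ N = 0`, so `(L + N)⁻¹ = L⁻¹ - s A - t B` exactly, with `A = L⁻¹ E_{uv} L⁻¹` and
`B = L⁻¹ E_{u'v} L⁻¹`. As `(M D Mᵀ)⁻¹ = M⁻ᵀ D⁻¹ M⁻¹`, the function is `β(X, X)` for the bilinear
form `β(X, Y) = tr(Xᵀ D⁻¹ Y U)` and `X = L⁻¹ - s A - t B`, so its mixed derivative is
`β(A, B) + β(B, A)`. Each of these two terms equals `(L⁻ᵀ D⁻¹ L⁻¹)_{uu'} (L⁻¹ U L⁻ᵀ)_{vv}`, using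
the symmetry of `L⁻ᵀ D⁻¹ L⁻¹ = (L D Lᵀ)⁻¹`.
-/

open Matrix

namespace LinearMap.BilinForm

variable {𝕜 V : Type*} [NontriviallyNormedField 𝕜] [AddCommGroup V] [Module 𝕜 V]

theorem deriv_deriv_apply_sub_smul_sub_smul (β : LinearMap.BilinForm 𝕜 V) (P A B : V) :
    deriv (fun s : 𝕜 => deriv (fun t : 𝕜 => β (P - s • A - t • B) (P - s • A - t • B)) 0) 0
      = β A B + β B A := by
  have expand (s t : 𝕜) : β (P - s • A - t • B) (P - s • A - t • B)
      = β (P - s • A) (P - s • A) + t * (t * β B B - (β P B + β B P - s * (β A B + β B A))) := by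
    simp only [map_sub, map_smul, LinearMap.sub_apply, LinearMap.smul_apply, smul_eq_mul]
    ring
  simp only [expand]
  simp

end LinearMap.BilinForm

namespace Matrix

variable {n R : Type*} [Fintype n]

section CommSemiring

variable [CommSemiring R]

theorem isSymm_mul_mul_transpose {D : Matrix n n R} (hD : D.IsSymm) (M : Matrix n n R) :
    (M * D * Mᵀ).IsSymm := by
  simp only [IsSymm, transpose_mul, hD.eq, transpose_transpose, Matrix.mul_assoc]

variable [DecidableEq n]

theorem smul_single_add_smul_single_mul_mul_self {C : Matrix n n R} {u u' v : n}
    (hu : C v u = 0) (hu' : C v u' = 0) (s t : R) :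
    (s • single u v 1 + t • single u' v 1) * C * (s • single u v 1 + t • single u' v 1) = 0 := by
  simp [add_mul, mul_add, hu, hu']

def traceForm (G U : Matrix n n R) : LinearMap.BilinForm R (Matrix n n R) :=
  LinearMap.mk₂ R (fun X Y => trace (Xᵀ * G * Y * U))
    (fun _ _ _ => by simp [add_mul])
    (fun _ _ _ => by simp)
    (fun _ _ _ => by simp [add_mul, mul_add])
    (fun _ _ _ => by simp)

theorem traceForm_apply (G U X Y : Matrix n n R) :
    traceForm G U X Y = trace (Xᵀ * G * Y * U) := rfl

theorem traceForm_mul_single_mul (G U C : Matrix n n R) (u u' v : n) :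
    traceForm G U (C * single u v 1 * C) (C * single u' v 1 * C)
      = (Cᵀ * G * C) u u' * (C * U * Cᵀ) v v := by
  calc traceForm G U (C * single u v 1 * C) (C * single u' v 1 * C)
      = trace (single v u 1 * (Cᵀ * G * C) * single u' v 1 * (C * U * Cᵀ)) := by
        rw [traceForm_apply]
        simp only [transpose_mul, transpose_single, Matrix.mul_assoc]
        rw [trace_mul_comm]
        simp only [Matrix.mul_assoc]
    _ = (Cᵀ * G * C) u u' * (C * U * Cᵀ) v v := by
        rw [single_mul_mul_single, trace_single_mul]
        simp

end CommSemiring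

section CommRing

variable [CommRing R] [DecidableEq n]

theorem inv_add_of_mul_inv_mul_eq_zero {L N : Matrix n n R} (hL : IsUnit L.det)
    (hN : N * L⁻¹ * N = 0) : (L + N)⁻¹ = L⁻¹ - L⁻¹ * N * L⁻¹ := by
  refine inv_eq_right_inv ?_
  calc (L + N) * (L⁻¹ - L⁻¹ * N * L⁻¹)
      = L * L⁻¹ + N * L⁻¹ - L * L⁻¹ * N * L⁻¹ - N * L⁻¹ * N * L⁻¹ := by noncomm_ring
    _ = 1 := by rw [mul_nonsing_inv L hL, hN]; noncomm_ring

theorem mul_mul_transpose_inv (M D : Matrix n n R) : (M * D * Mᵀ)⁻¹ = M⁻¹ᵀ * D⁻¹ * M⁻¹ := by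
  rw [Matrix.mul_inv_rev, Matrix.mul_inv_rev, transpose_nonsing_inv, Matrix.mul_assoc]

variable [LinearOrder n]

theorem det_eq_one_of_isLowerTriangular {L : Matrix n n R} (h : L.IsLowerTriangular)
    (hdiag : ∀ i, L i i = 1) : L.det = 1 := by
  simp [det_of_isLowerTriangular L h, hdiag]

theorem IsLowerTriangular.inv {L : Matrix n n R} (h : L.IsLowerTriangular)
    (hL : IsUnit L.det) : L⁻¹.IsLowerTriangular :=
  letI := L.invertibleOfIsUnitDet hL
  blockTriangular_inv_of_blockTriangular h

end CommRing

end Matrix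

theorem stmt_5_general {m : ℕ} (L : Matrix (Fin m) (Fin m) ℝ)
    (hlow : ∀ i j : Fin m, i < j → L i j = 0)
    (hdiag : ∀ i : Fin m, L i i = 1)
    (d : Fin m → ℝ)
    (U : Matrix (Fin m) (Fin m) ℝ)
    (u u' v : Fin m) (hu : v < u) (hu' : v < u') :
    deriv (fun s : ℝ => deriv (fun t : ℝ =>
        Matrix.trace
          (((L + s • Matrix.single u v (1 : ℝ) +
                t • Matrix.single u' v (1 : ℝ)) * Matrix.diagonal d *
              (L + s • Matrix.single u v (1 : ℝ) +
                t • Matrix.single u' v (1 : ℝ))ᵀ)⁻¹ * U)) 0) 0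
      = 2 * ((L⁻¹ * U * (Lᵀ)⁻¹) v v) * ((L * Matrix.diagonal d * Lᵀ)⁻¹) u u' := by
  have hLtri : L.IsLowerTriangular := fun i j h => hlow i j h
  have hL : IsUnit L.det := det_eq_one_of_isLowerTriangular hLtri hdiag ▸ isUnit_one
  have hLinvtri := hLtri.inv hL
  have hinv (s t : ℝ) : (L + s • single u v 1 + t • single u' v 1)⁻¹
      = L⁻¹ - s • (L⁻¹ * single u v 1 * L⁻¹) - t • (L⁻¹ * single u' v 1 * L⁻¹) := by
    rw [add_assoc, inv_add_of_mul_inv_mul_eq_zero hL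
      (smul_single_add_smul_single_mul_mul_self (hLinvtri hu) (hLinvtri hu') s t)]
    simp only [mul_add, add_mul, Matrix.mul_smul, Matrix.smul_mul, sub_add_eq_sub_sub]
  have hsymm : (L⁻¹ᵀ * (diagonal d)⁻¹ * L⁻¹).IsSymm :=
    mul_mul_transpose_inv L (diagonal d) ▸ (isSymm_mul_mul_transpose (isSymm_diagonal d) L).inv
  simp only [mul_mul_transpose_inv _ (diagonal d), ← traceForm_apply, hinv,
    LinearMap.BilinForm.deriv_deriv_apply_sub_smul_sub_smul, traceForm_mul_single_mul,
    ← transpose_nonsing_inv, hsymm.apply u u']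
  ring

/-- the mixed second partial derivative at `(s,t) = (0,0)` of
`h(s,t) = tr(((L + sE_{uv} + tE_{u'v}) D (L + sE_{uv} + tE_{u'v})ᵀ)⁻¹ U)` equals
`2 (L⁻¹ U (Lᵀ)⁻¹)_{vv} ((LDLᵀ)⁻¹)_{uu'}`. -/
theorem stmt_5 {m : ℕ} (hm : 0 < m) (L : Matrix (Fin m) (Fin m) ℝ)
    (hlow : ∀ i j : Fin m, i < j → L i j = 0)
    (hdiag : ∀ i : Fin m, L i i = 1)
    (d : Fin m → ℝ) (hd : ∀ i, 0 < d i)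
    (U : Matrix (Fin m) (Fin m) ℝ) (hUsymm : U.IsSymm)
    (u u' v : Fin m) (hu : v < u) (hu' : v < u') :
    deriv (fun s : ℝ => deriv (fun t : ℝ =>
        Matrix.trace
          (((L + s • Matrix.single u v (1 : ℝ) +
                t • Matrix.single u' v (1 : ℝ)) * Matrix.diagonal d *
              (L + s • Matrix.single u v (1 : ℝ) +
                t • Matrix.single u' v (1 : ℝ))ᵀ)⁻¹ * U)) 0) 0
      = 2 * ((L⁻¹ * U * (Lᵀ)⁻¹) v v) * ((L * Matrix.diagonal d * Lᵀ)⁻¹) u u' :=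
  stmt_5_general L hlow hdiag d U u u' v hu hu'
end

section
/- Fix v ∈ {1,…,m−1}, let F := {u : u > v, (u,v) ∈ E}, and fix L ∈ 𝓛_G, D diagonal with all D_{ii} > 0, and U symmetric positive definite. For x ∈ ℝ^F let L(x) ∈ 𝓛_G be the matrix obtained from L by replacing the entry L_{uv} by x_u for each u ∈ F, all other entries unchanged. Then there exist b ∈ ℝ^F and C ∈ ℝ, not depending on x, such that for all x ∈ ℝ^F: tr((L(x) D L(x)ᵀ)⁻¹ U) = Σ_{u∈F} Σ_{u′∈F} A_{uu′}(x_u − b_u)(x_{u′} − b_{u′}) + C, where A_{uu′} := (L⁻¹ U (Lᵀ)⁻¹)_{vv} · ((LDLᵀ)⁻¹)_{uu′} (a quantity that does not depend on the below-diagonal entries of column v of L). -/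
/-!
Write `L(x) = L + c eᵥᵀ`, where `c` is supported on `F` with `c_u = x_u - L_{uv}`. Since `L⁻¹` is
lower triangular and `c` vanishes at the indices `≤ v`, we have `eᵥᵀ L⁻¹ c = 0`, so the
Sherman–Morrison formula degenerates to `L(x)⁻¹ = L⁻¹ - (L⁻¹ c) rᵀ`, with `r` the `v`-th row of
`L⁻¹`. Substituting into `(L(x) D L(x)ᵀ)⁻¹ = L(x)⁻ᵀ D⁻¹ L(x)⁻¹` and writing `P = (L D Lᵀ)⁻¹`,
`tr((L(x) D L(x)ᵀ)⁻¹ U) = tr(P U) - 2 cᵀ P U r + (rᵀ U r) cᵀ P c`.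
This is a quadratic polynomial in `(x_u)_{u ∈ F}` whose quadratic part `(rᵀ U r) P|_{F×F}` is
positive definite, hence invertible, so completing the square produces `b` and `C`.
-/

open Matrix

/-- The matrix obtained from `L` by replacing, for each `u ∈ F = {u : u > v, (u,v) ∈ E}`,
the entry `L u v` by `x u`; all other entries are unchanged. -/
noncomputable def replaceColumn {m : ℕ} (E : Finset (Fin m × Fin m)) (v : Fin m)
    (L : Matrix (Fin m) (Fin m) ℝ)
    (x : {u : Fin m // v < u ∧ (u, v) ∈ E} → ℝ) :
    Matrix (Fin m) (Fin m) ℝ :=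
  Matrix.of fun i j =>
    if h : j = v ∧ v < i ∧ (i, v) ∈ E then x ⟨i, h.2⟩ else L i j

section RankOneUpdate

variable {n R : Type*} [Fintype n] [CommRing R]

theorem Matrix.mulVec_dotProduct_mulVec (M N : Matrix n n R) (c r : n → R) :
    (M *ᵥ c) ⬝ᵥ N *ᵥ r = c ⬝ᵥ (Mᵀ * N) *ᵥ r := by
  rw [← vecMul_transpose, ← dotProduct_mulVec, mulVec_mulVec]

theorem Matrix.trace_transpose_mul_mul_sub_vecMulVec {K U : Matrix n n R} (hK : K.IsSymm)
    (hU : U.IsSymm) (A : Matrix n n R) (w r : n → R) :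
    trace ((A - vecMulVec w r)ᵀ * K * (A - vecMulVec w r) * U) =
      trace (Aᵀ * K * A * U) - 2 * (w ⬝ᵥ (K * A * U) *ᵥ r) +
        (w ⬝ᵥ K *ᵥ w) * (r ⬝ᵥ U *ᵥ r) := by
  have cross : trace (Aᵀ * K * vecMulVec w r * U) = w ⬝ᵥ (K * A * U) *ᵥ r := by
    rw [Matrix.mul_assoc (Aᵀ * K), vecMulVec_mul, mul_vecMulVec, trace_vecMulVec,
      ← vecMul_transpose, transpose_mul, transpose_transpose, hK.eq, ← mulVec_transpose U r,
      hU.eq, dotProduct_mulVec, vecMul_vecMul, ← dotProduct_mulVec]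
  have cross' : trace ((vecMulVec w r)ᵀ * K * A * U) = trace (Aᵀ * K * vecMulVec w r * U) := by
    rw [← trace_transpose]
    simp only [transpose_mul, transpose_transpose, hK.eq, hU.eq, Matrix.mul_assoc]
    rw [trace_mul_comm]
    simp only [Matrix.mul_assoc]
  have quad : trace ((vecMulVec w r)ᵀ * K * vecMulVec w r * U) =
      (w ⬝ᵥ K *ᵥ w) * (r ⬝ᵥ U *ᵥ r) := by
    rw [transpose_vecMulVec, vecMulVec_mul, vecMulVec_mul_vecMulVec, vecMulVec_smul, smul_mul,
      trace_smul, vecMulVec_mul, trace_vecMulVec, smul_eq_mul, dotProduct_mulVec,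
      dotProduct_mulVec r, dotProduct_comm (r ᵥ* U)]
  simp only [transpose_sub, sub_mul, mul_sub, trace_sub]
  rw [cross', cross, quad]
  ring

variable [DecidableEq n]

theorem Matrix.inv_mul_mul_transpose (N D : Matrix n n R) :
    (N * D * Nᵀ)⁻¹ = (N⁻¹)ᵀ * D⁻¹ * N⁻¹ := by
  rw [mul_inv_rev, mul_inv_rev, transpose_nonsing_inv, Matrix.mul_assoc]

theorem Matrix.inv_add_vecMulVec_of_dotProduct_eq_zero {L : Matrix n n R} (hL : IsUnit L.det)
    {c s : n → R} (h : s ⬝ᵥ (L⁻¹ *ᵥ c) = 0) :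
    (L + vecMulVec c s)⁻¹ = L⁻¹ - vecMulVec (L⁻¹ *ᵥ c) (s ᵥ* L⁻¹) := by
  apply inv_eq_right_inv
  rw [add_mul, mul_sub, mul_sub, mul_nonsing_inv L hL, mul_vecMulVec, mulVec_mulVec,
    mul_nonsing_inv L hL, one_mulVec, vecMulVec_mul, vecMulVec_mul_vecMulVec, h, zero_smul,
    vecMulVec_zero, sub_zero, sub_add_cancel]

theorem Matrix.trace_inv_mul_mul_transpose_add_vecMulVec {L D U : Matrix n n R}
    (hL : IsUnit L.det) (hD : D.IsSymm) (hU : U.IsSymm) {c s : n → R}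
    (h : s ⬝ᵥ (L⁻¹ *ᵥ c) = 0) :
    trace (((L + vecMulVec c s) * D * (L + vecMulVec c s)ᵀ)⁻¹ * U) =
      trace ((L * D * Lᵀ)⁻¹ * U) - 2 * (c ⬝ᵥ ((L * D * Lᵀ)⁻¹ * U) *ᵥ (s ᵥ* L⁻¹)) +
        (c ⬝ᵥ (L * D * Lᵀ)⁻¹ *ᵥ c) * ((s ᵥ* L⁻¹) ⬝ᵥ U *ᵥ (s ᵥ* L⁻¹)) := by
  rw [inv_mul_mul_transpose, inv_mul_mul_transpose L,
    inv_add_vecMulVec_of_dotProduct_eq_zero hL h, trace_transpose_mul_mul_sub_vecMulVec hD.inv hU,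
    mulVec_dotProduct_mulVec, mulVec_dotProduct_mulVec]
  simp only [mulVec_mulVec, Matrix.mul_assoc]

end RankOneUpdate

section ExtendByZero

variable {ι κ R : Type*} [Fintype ι] [Fintype κ] [CommRing R] {f : ι → κ}

theorem Function.Injective.extend_zero_dotProduct (hf : f.Injective) (y : ι → R) (z : κ → R) :
    Function.extend f y 0 ⬝ᵥ z = y ⬝ᵥ (z ∘ f) :=
  (Fintype.sum_of_injective f hf _ _ (fun k hk => by simp [Function.extend_apply' _ _ _ hk])
    fun i => by simp [hf.extend_apply]).symm

theorem Function.Injective.mulVec_extend_zero (hf : f.Injective) (M : Matrix κ κ R)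
    (y : ι → R) :
    M *ᵥ Function.extend f y 0 = M.submatrix id f *ᵥ y := by
  ext k
  exact (dotProduct_comm _ _).trans ((hf.extend_zero_dotProduct y _).trans (dotProduct_comm _ _))

theorem Function.Injective.extend_zero_dotProduct_mulVec (hf : f.Injective) (M : Matrix κ κ R)
    (y : ι → R) :
    Function.extend f y 0 ⬝ᵥ M *ᵥ Function.extend f y 0 = y ⬝ᵥ M.submatrix f f *ᵥ y := by
  rw [hf.mulVec_extend_zero, hf.extend_zero_dotProduct]
  rfl

end ExtendByZero

section QuadraticForm

variable {ι R : Type*} [Fintype ι] [CommRing R]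

theorem Matrix.dotProduct_mulVec_eq_sum_sum (M : Matrix ι ι R) (z : ι → R) :
    z ⬝ᵥ M *ᵥ z = ∑ i, ∑ j, M i j * z i * z j := by
  simp only [dotProduct, mulVec, Finset.mul_sum]
  exact Finset.sum_congr rfl fun i _ => Finset.sum_congr rfl fun j _ => by ring

theorem Matrix.row_dotProduct_mulVec_row (A U : Matrix ι ι R) (v : ι) :
    A.row v ⬝ᵥ U *ᵥ A.row v = (A * U * Aᵀ) v v := by
  simp only [mul_apply, dotProduct, mulVec, row_apply, transpose_apply, Finset.mul_sum,
    Finset.sum_mul]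
  rw [Finset.sum_comm]
  exact Finset.sum_congr rfl fun i _ => Finset.sum_congr rfl fun j _ => by ring

theorem Matrix.IsSymm.dotProduct_mulVec_sub_two_mul {A : Matrix ι ι R} (hA : A.IsSymm)
    (y β : ι → R) :
    y ⬝ᵥ A *ᵥ y - 2 * (y ⬝ᵥ A *ᵥ β) = (y - β) ⬝ᵥ A *ᵥ (y - β) - β ⬝ᵥ A *ᵥ β := by
  have hswap : β ⬝ᵥ A *ᵥ y = y ⬝ᵥ A *ᵥ β := by
    rw [dotProduct_mulVec, ← mulVec_transpose, hA.eq, dotProduct_comm]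
  simp only [mulVec_sub, dotProduct_sub, sub_dotProduct, hswap]
  ring

theorem Matrix.IsSymm.exists_sub_dotProduct_mulVec_sub_eq_sum_sum [DecidableEq ι]
    {A : Matrix ι ι R} (hA : A.IsSymm) (hdet : IsUnit A.det) (ℓ a : ι → R) (K : R) :
    ∃ (b : ι → R) (C : R), ∀ x : ι → R,
      K + ((x - a) ⬝ᵥ A *ᵥ (x - a) - 2 * ((x - a) ⬝ᵥ ℓ)) =
        ∑ i, ∑ j, A i j * (x i - b i) * (x j - b j) + C := by
  set β := A⁻¹ *ᵥ ℓ
  have hβ : A *ᵥ β = ℓ := by rw [mulVec_mulVec, mul_nonsing_inv A hdet, one_mulVec]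
  refine ⟨a + β, K - β ⬝ᵥ A *ᵥ β, fun x => ?_⟩
  rw [← hβ, hA.dotProduct_mulVec_sub_two_mul, sub_sub, dotProduct_mulVec_eq_sum_sum]
  simp only [Pi.sub_apply]
  ring

theorem Matrix.IsLowerTriangular.mulVec_apply_eq_zero [LinearOrder ι] {B : Matrix ι ι R}
    (hB : B.IsLowerTriangular) {c : ι → R} {i : ι} (hc : ∀ j ≤ i, c j = 0) :
    (B *ᵥ c) i = 0 :=
  Finset.sum_eq_zero fun j _ => by
    rcases le_or_gt j i with hji | hij
    · rw [hc j hji, mul_zero]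
    · simp [hB hij]

end QuadraticForm

theorem replaceColumn_eq_add_vecMulVec {m : ℕ} (E : Finset (Fin m × Fin m)) (v : Fin m)
    (L : Matrix (Fin m) (Fin m) ℝ) (x : {u : Fin m // v < u ∧ (u, v) ∈ E} → ℝ) :
    replaceColumn E v L x =
      L + vecMulVec (Function.extend Subtype.val (fun u => x u - L u v) 0) (Pi.single v 1) := by
  ext i j
  by_cases hj : j = v
  · subst hj
    by_cases hi : j < i ∧ (i, j) ∈ E
    · rw [Matrix.add_apply, vecMulVec_apply,
        Function.extend_val_apply (p := fun u => j < u ∧ (u, j) ∈ E) hi]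
      simp [replaceColumn, hi]
    · simp [replaceColumn, hi, vecMulVec_apply]
  · simp [replaceColumn, hj, vecMulVec_apply]

theorem trace_inv_replaceColumn_mul {m : ℕ} (E : Finset (Fin m × Fin m)) (v : Fin m)
    {L D U : Matrix (Fin m) (Fin m) ℝ} (hT : L.IsLowerTriangular) (hL : IsUnit L.det)
    (hD : D.IsSymm) (hU : U.IsSymm) (x : {u : Fin m // v < u ∧ (u, v) ∈ E} → ℝ) :
    trace ((replaceColumn E v L x * D * (replaceColumn E v L x)ᵀ)⁻¹ * U) =
      trace ((L * D * Lᵀ)⁻¹ * U) +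
        ((fun u => x u - L u v) ⬝ᵥ ((L⁻¹ * U * (Lᵀ)⁻¹) v v •
            (L * D * Lᵀ)⁻¹.submatrix Subtype.val Subtype.val) *ᵥ (fun u => x u - L u v) -
          2 * ((fun u => x u - L u v) ⬝ᵥ (((L * D * Lᵀ)⁻¹ * U) *ᵥ L⁻¹.row v) ∘ Subtype.val)) := by
  have : Invertible L := L.invertibleOfIsUnitDet hL
  have horth : Pi.single v 1 ⬝ᵥ
      (L⁻¹ *ᵥ Function.extend Subtype.val (fun u => x u - L u v) 0) = 0 := by
    rw [single_dotProduct, one_mul]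
    exact IsLowerTriangular.mulVec_apply_eq_zero (blockTriangular_inv_of_blockTriangular hT)
      fun j hj => Function.extend_val_apply' fun h => h.1.not_ge hj
  rw [replaceColumn_eq_add_vecMulVec, trace_inv_mul_mul_transpose_add_vecMulVec hL hD hU horth,
    single_one_vecMul, Subtype.val_injective.extend_zero_dotProduct,
    Subtype.val_injective.extend_zero_dotProduct_mulVec, row_dotProduct_mulVec_row,
    ← transpose_nonsing_inv, smul_mulVec, dotProduct_smul, smul_eq_mul]
  ring

theorem stmt_7_general {m : ℕ} (E : Finset (Fin m × Fin m))
    (v : Fin m)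
    (L : Matrix (Fin m) (Fin m) ℝ)
    (hlow : ∀ i j : Fin m, i < j → L i j = 0)
    (hdiag : ∀ i : Fin m, L i i = 1)
    (d : Fin m → ℝ) (hd : ∀ i, 0 < d i)
    (U : Matrix (Fin m) (Fin m) ℝ) (hU : U.PosDef) :
    ∃ (b : {u : Fin m // v < u ∧ (u, v) ∈ E} → ℝ) (C : ℝ),
      ∀ x : {u : Fin m // v < u ∧ (u, v) ∈ E} → ℝ,
        Matrix.trace
            ((replaceColumn E v L x * Matrix.diagonal d * (replaceColumn E v L x)ᵀ)⁻¹ * U)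
          = (∑ u : {u : Fin m // v < u ∧ (u, v) ∈ E},
              ∑ u' : {u : Fin m // v < u ∧ (u, v) ∈ E},
                ((L⁻¹ * U * (Lᵀ)⁻¹) v v * ((L * Matrix.diagonal d * Lᵀ)⁻¹) u.1 u'.1) *
                  (x u - b u) * (x u' - b u')) + C := by
  have hT : L.IsLowerTriangular := fun i j h => hlow i j h
  have hL : IsUnit L.det := by
    rw [det_of_isLowerTriangular L hT]
    simp [hdiag]
  have hP : (L * diagonal d * Lᵀ)⁻¹.PosDef := by
    have := ((isUnit_iff_isUnit_det L).mpr hL).posDef_star_right_conjugate_iff.mpr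
      (PosDef.diagonal hd)
    rw [star_eq_conjTranspose, conjTranspose_eq_transpose_of_trivial] at this
    exact this.inv
  have hα : 0 < (L⁻¹ * U * (Lᵀ)⁻¹) v v := by
    have := ((isUnit_iff_isUnit_det L⁻¹).mpr
      (isUnit_nonsing_inv_det L hL)).posDef_star_right_conjugate_iff.mpr hU
    rw [star_eq_conjTranspose, conjTranspose_eq_transpose_of_trivial,
      transpose_nonsing_inv] at this
    exact this.diag_pos
  have hA := (hP.submatrix (Subtype.val_injective (p := fun u => v < u ∧ (u, v) ∈ E))).smul hα
  obtain ⟨b, C, hbC⟩ := IsSymm.exists_sub_dotProduct_mulVec_sub_eq_sum_sum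
    (isHermitian_iff_isSymm.mp hA.isHermitian) ((isUnit_iff_isUnit_det _).mp hA.isUnit)
    ((((L * diagonal d * Lᵀ)⁻¹ * U) *ᵥ L⁻¹.row v) ∘ Subtype.val) (fun u => L u v)
    (trace ((L * diagonal d * Lᵀ)⁻¹ * U))
  exact ⟨b, C, fun x => (trace_inv_replaceColumn_mul E v hT hL (isSymm_diagonal d)
    (isHermitian_iff_isSymm.mp hU.isHermitian) x).trans (hbC x)⟩

/-- with `F = {u : u > v, (u,v) ∈ E}` and `L(x)` the matrix obtained from
`L ∈ 𝓛_G` by replacing the free entries of column `v` by `x : F → ℝ`, there are `b : F → ℝ`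
and `C : ℝ`, independent of `x`, such that
`tr((L(x) D L(x)ᵀ)⁻¹ U) = Σ_{u,u'∈F} A_{uu'} (x_u − b_u)(x_{u'} − b_{u'}) + C`, where
`A_{uu'} = (L⁻¹ U (Lᵀ)⁻¹)_{vv} ((LDLᵀ)⁻¹)_{uu'}`. -/
theorem stmt_7 {m : ℕ} (hm : 0 < m) (E : Finset (Fin m × Fin m))
    (hsymm : ∀ i j : Fin m, (i, j) ∈ E → (j, i) ∈ E)
    (hirr : ∀ i : Fin m, (i, i) ∉ E)
    (v : Fin m)
    (L : Matrix (Fin m) (Fin m) ℝ)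
    (hlow : ∀ i j : Fin m, i < j → L i j = 0)
    (hdiag : ∀ i : Fin m, L i i = 1)
    (hLG : ∀ i j : Fin m, j < i → (i, j) ∉ E → L i j = 0)
    (d : Fin m → ℝ) (hd : ∀ i, 0 < d i)
    (U : Matrix (Fin m) (Fin m) ℝ) (hU : U.PosDef) :
    ∃ (b : {u : Fin m // v < u ∧ (u, v) ∈ E} → ℝ) (C : ℝ),
      ∀ x : {u : Fin m // v < u ∧ (u, v) ∈ E} → ℝ,
        Matrix.trace
            ((replaceColumn E v L x * Matrix.diagonal d * (replaceColumn E v L x)ᵀ)⁻¹ * U)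
          = (∑ u : {u : Fin m // v < u ∧ (u, v) ∈ E},
              ∑ u' : {u : Fin m // v < u ∧ (u, v) ∈ E},
                ((L⁻¹ * U * (Lᵀ)⁻¹) v v * ((L * Matrix.diagonal d * Lᵀ)⁻¹) u.1 u'.1) *
                  (x u - b u) * (x u' - b u')) + C :=
  stmt_7_general E v L hlow hdiag d hd U hU
end

section
/- The map Φ from ℝ^{E^≺} to ℝ^{E^≺} defined as follows is a bijection: given free entries x = (x_{ij})_{(i,j)∈E^≺}, let L(x) ∈ 𝓛_G be the unit lower-triangular matrix with L(x)_{ij} = x_{ij} for (i,j) ∈ E^≺ and L(x)_{ij} = 0 for all other i > j, and set Φ(x) := ((L(x)⁻¹)_{ij})_{(i,j)∈E^≺}. -/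
/-!
Write `L = L(x)`. From `L * L⁻¹ = 1` one gets `L⁻¹ + L = 2 + (L - 1)² L⁻¹`, and since `L - 1` is
strictly lower triangular, the `(i, j)` entry of `(L - 1)² L⁻¹` only involves entries `x_{kl}`
with `k - l < i - j`. Hence `Φ(x)_{ij} = -x_{ij} + p_{ij}(x)`, where `p_{ij}` only depends on the
coordinates of smaller gap, and such a map can be inverted one gap at a time.
-/

open Matrix

/-- The unit lower-triangular matrix in `𝓛_G` whose free entries (the entries `(i,j)` with
`(i,j) ∈ E` and `j < i`) are given by `x`; all other off-diagonal entries are `0`. -/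
noncomputable def lowerOfCoords {m : ℕ} (E : Finset (Fin m × Fin m))
    (x : {p : Fin m × Fin m // p ∈ E ∧ p.2 < p.1} → ℝ) :
    Matrix (Fin m) (Fin m) ℝ :=
  Matrix.of fun i j =>
    if i = j then 1
    else if h : (i, j) ∈ E ∧ j < i then x ⟨(i, j), h⟩ else 0

theorem add_eq_two_add_sub_one_mul_sub_one_mul_of_mul_eq_one {R : Type*} [Ring R] {a b : R}
    (h : a * b = 1) : b + a = 2 + (a - 1) * (a - 1) * b := by
  calc b + a = 2 + a * (a * b) - 2 * (a * b) + b := by rw [h, mul_one, mul_one]; abel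
    _ = 2 + (a - 1) * (a - 1) * b := by noncomm_ring

namespace Matrix

variable {m : ℕ} {R : Type*}

/-- For `g = 0` (resp. `g = 1`) this says that `A` is lower (resp. strictly lower) triangular. -/
def SupportedBelow [Zero R] (g : ℕ) (A : Matrix (Fin m) (Fin m) R) : Prop :=
  ∀ i j : Fin m, (i : ℕ) < j + g → A i j = 0

namespace SupportedBelow

theorem mono [Zero R] {p q : ℕ} {A : Matrix (Fin m) (Fin m) R} (hA : SupportedBelow q A)
    (h : p ≤ q) : SupportedBelow p A :=
  fun i j hij => hA i j (by omega)

theorem add [AddZeroClass R] {g : ℕ} {A B : Matrix (Fin m) (Fin m) R} (hA : SupportedBelow g A)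
    (hB : SupportedBelow g B) : SupportedBelow g (A + B) :=
  fun i j hij => by rw [add_apply, hA i j hij, hB i j hij, add_zero]

theorem neg [SubtractionMonoid R] {g : ℕ} {A : Matrix (Fin m) (Fin m) R}
    (hA : SupportedBelow g A) : SupportedBelow g (-A) :=
  fun i j hij => by rw [neg_apply, hA i j hij, neg_zero]

theorem mul [NonUnitalNonAssocSemiring R] {p q : ℕ} {A B : Matrix (Fin m) (Fin m) R}
    (hA : SupportedBelow p A) (hB : SupportedBelow q B) : SupportedBelow (p + q) (A * B) := by
  intro i j hij
  rw [mul_apply]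
  refine Finset.sum_eq_zero fun k _ => ?_
  by_cases hik : (i : ℕ) < k + p
  · rw [hA i k hik, zero_mul]
  · rw [hB k j (by omega), mul_zero]

theorem one [Zero R] [One R] : SupportedBelow 0 (1 : Matrix (Fin m) (Fin m) R) :=
  fun _ _ hij => one_apply_ne (Fin.ne_of_lt (by simpa using hij))

theorem isLowerTriangular [Zero R] {A : Matrix (Fin m) (Fin m) R} (hA : SupportedBelow 0 A) :
    A.IsLowerTriangular :=
  fun i j hij => hA i j (by simpa using hij)

theorem of_isLowerTriangular [Zero R] {A : Matrix (Fin m) (Fin m) R} (hA : A.IsLowerTriangular) :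
    SupportedBelow 0 A :=
  fun i j hij => hA (by simpa using hij)

variable [CommRing R] {A B : Matrix (Fin m) (Fin m) R}

theorem of_sub_one (hA : SupportedBelow 1 (A - 1)) : SupportedBelow 0 A := by
  simpa using ((hA.mono (Nat.zero_le 1)).add one)

theorem det_eq_one (hA : SupportedBelow 1 (A - 1)) : A.det = 1 := by
  rw [det_of_isLowerTriangular A (of_sub_one hA).isLowerTriangular]
  refine Finset.prod_eq_one fun i _ => ?_
  simpa [sub_eq_zero] using hA i i (Nat.lt_succ_self i)

theorem inv (hA : SupportedBelow 0 A) (hdet : IsUnit A.det) : SupportedBelow 0 A⁻¹ :=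
  letI := invertibleOfIsUnitDet A hdet
  of_isLowerTriangular (blockTriangular_inv_of_blockTriangular hA.isLowerTriangular)

theorem inv_sub_inv {g : ℕ} (hA : SupportedBelow 0 A) (hB : SupportedBelow 0 B)
    (hdetA : IsUnit A.det) (hdetB : IsUnit B.det) (hAB : SupportedBelow g (A - B)) :
    SupportedBelow g (A⁻¹ - B⁻¹) := by
  have h : A⁻¹ - B⁻¹ = A⁻¹ * -(A - B) * B⁻¹ := by
    rw [neg_sub, Matrix.mul_sub, Matrix.sub_mul, nonsing_inv_mul A hdetA,
      Matrix.mul_assoc, mul_nonsing_inv B hdetB, Matrix.mul_one, Matrix.one_mul]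
  simpa [h] using ((hA.inv hdetA).mul hAB.neg).mul (hB.inv hdetB)

theorem inv_add_sub_inv_add {g : ℕ} (hA : SupportedBelow 1 (A - 1))
    (hB : SupportedBelow 1 (B - 1)) (hAB : SupportedBelow g (A - B)) :
    SupportedBelow (g + 1) (A⁻¹ + A - (B⁻¹ + B)) := by
  have hdetA : IsUnit A.det := by rw [hA.det_eq_one]; exact isUnit_one
  have hdetB : IsUnit B.det := by rw [hB.det_eq_one]; exact isUnit_one
  have h : A⁻¹ + A - (B⁻¹ + B) = (A - B) * (A - 1) * A⁻¹ + (B - 1) * (A - B) * A⁻¹ +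
      (B - 1) * (B - 1) * (A⁻¹ - B⁻¹) := by
    rw [add_eq_two_add_sub_one_mul_sub_one_mul_of_mul_eq_one (mul_nonsing_inv A hdetA),
      add_eq_two_add_sub_one_mul_sub_one_mul_of_mul_eq_one (mul_nonsing_inv B hdetB)]
    noncomm_ring
  have hAinv := (of_sub_one hA).inv hdetA
  have hinvSub := (of_sub_one hA).inv_sub_inv (of_sub_one hB) hdetA hdetB hAB
  rw [h]
  exact ((((hAB.mul hA).mul hAinv).mono (by omega)).add (((hB.mul hAB).mul hAinv).mono
    (by omega))).add (((hB.mul hB).mul hinvSub).mono (by omega))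

end SupportedBelow

end Matrix

section TriangularPerturbation

open Function

variable {ι G : Type*} [AddCommGroup G] {F : (ι → G) → ι → G}

theorem injective_of_add_self_eq_of_eqOn_lt (d : ι → ℕ)
    (hF : ∀ x y q, (∀ r, d r < d q → x r = y r) → F x q + x q = F y q + y q) :
    Injective F := by
  intro x y hxy
  funext q
  induction h : d q using Nat.strong_induction_on generalizing q with
  | _ n ih =>
    have hq := hF x y q fun r hr => ih (d r) (h ▸ hr) r rfl
    rwa [congrFun hxy q, add_right_inj] at hq

theorem surjective_of_add_self_eq_of_eqOn_lt (d : ι → ℕ)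
    (hF : ∀ x y q, (∀ r, d r < d q → x r = y r) → F x q + x q = F y q + y q) :
    Surjective F := by
  -- A preimage of `z` is the pointwise limit of the iteration `x ↦ F x + x - z` started at `0`:
  -- its value at an index of degree `d` is fixed after `d + 1` steps.
  intro z
  let u : ℕ → ι → G := fun n => (fun x => F x + x - z)^[n] 0
  have hu (n : ℕ) : u (n + 1) = F (u n) + u n - z := iterate_succ_apply' _ _ _
  have stable (n : ℕ) : ∀ q, d q < n → u (n + 1) q = u n q := by
    induction n with
    | zero => exact fun q hq => absurd hq (Nat.not_lt_zero _)
    | succ n ih =>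
      intro q hq
      rw [hu (n + 1), Pi.sub_apply, Pi.add_apply,
        hF (u (n + 1)) (u n) q fun r hr => ih r (by omega), hu n]
      rfl
  have stable_of_le (q : ι) (n : ℕ) (hn : d q + 1 ≤ n) : u n q = u (d q + 1) q := by
    induction n, hn using Nat.le_induction with
    | base => rfl
    | succ n hn ih => rw [stable n q (by omega), ih]
  refine ⟨fun q => u (d q + 1) q, funext fun q => ?_⟩
  have hq := hF (fun r => u (d r + 1) r) (u (d q + 1)) q
    fun r hr => (stable_of_le r (d q + 1) (by omega)).symm
  have hfix := stable (d q + 1) q (Nat.lt_succ_self _)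
  rw [hu, Pi.sub_apply, Pi.add_apply, sub_eq_iff_eq_add, add_comm (u _ q) (z q),
    add_left_inj] at hfix
  rw [add_left_inj] at hq
  exact hq.trans hfix

end TriangularPerturbation

section LowerOfCoords

variable {m : ℕ} (E : Finset (Fin m × Fin m))

theorem lowerOfCoords_apply_coord (x : {p : Fin m × Fin m // p ∈ E ∧ p.2 < p.1} → ℝ)
    (q : {p : Fin m × Fin m // p ∈ E ∧ p.2 < p.1}) : lowerOfCoords E x q.1.1 q.1.2 = x q := by
  simp [lowerOfCoords, q.2, q.2.2.ne']

theorem lowerOfCoords_sub_one_supportedBelow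
    (x : {p : Fin m × Fin m // p ∈ E ∧ p.2 < p.1} → ℝ) :
    (lowerOfCoords E x - 1).SupportedBelow 1 := by
  intro i j hij
  have hji : ¬ j < i := by rw [Fin.lt_def]; omega
  by_cases h : i = j
  · simp [lowerOfCoords, h]
  · simp [lowerOfCoords, h, hji, one_apply_ne h]

theorem lowerOfCoords_sub_lowerOfCoords_supportedBelow
    {x y : {p : Fin m × Fin m // p ∈ E ∧ p.2 < p.1} → ℝ} {g : ℕ}
    (hxy : ∀ r : {p : Fin m × Fin m // p ∈ E ∧ p.2 < p.1}, (r.1.1 : ℕ) - r.1.2 < g → x r = y r) :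
    (lowerOfCoords E x - lowerOfCoords E y).SupportedBelow g := by
  intro i j hij
  simp only [Matrix.sub_apply, lowerOfCoords, of_apply]
  split_ifs with _ h
  · exact sub_self _
  · rw [hxy _ (by simp only; omega), sub_self]
  · exact sub_self _

theorem inv_lowerOfCoords_apply_add_eq {x y : {p : Fin m × Fin m // p ∈ E ∧ p.2 < p.1} → ℝ}
    (q : {p : Fin m × Fin m // p ∈ E ∧ p.2 < p.1})
    (hxy : ∀ r : {p : Fin m × Fin m // p ∈ E ∧ p.2 < p.1},
      (r.1.1 : ℕ) - r.1.2 < (q.1.1 : ℕ) - q.1.2 → x r = y r) :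
    (lowerOfCoords E x)⁻¹ q.1.1 q.1.2 + x q = (lowerOfCoords E y)⁻¹ q.1.1 q.1.2 + y q := by
  have hq : (q.1.2 : ℕ) < q.1.1 := q.2.2
  have h := (lowerOfCoords_sub_one_supportedBelow E x).inv_add_sub_inv_add
    (lowerOfCoords_sub_one_supportedBelow E y)
    (lowerOfCoords_sub_lowerOfCoords_supportedBelow E hxy) q.1.1 q.1.2 (by omega)
  rwa [Matrix.sub_apply, Matrix.add_apply, Matrix.add_apply, lowerOfCoords_apply_coord,
    lowerOfCoords_apply_coord, sub_eq_zero] at h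

end LowerOfCoords

theorem stmt_8_general {m : ℕ} (E : Finset (Fin m × Fin m)) :
    Function.Bijective
      (fun x : {p : Fin m × Fin m // p ∈ E ∧ p.2 < p.1} → ℝ =>
        fun q : {p : Fin m × Fin m // p ∈ E ∧ p.2 < p.1} =>
          (lowerOfCoords E x)⁻¹ q.1.1 q.1.2) :=
  ⟨injective_of_add_self_eq_of_eqOn_lt _ fun _ _ q => inv_lowerOfCoords_apply_add_eq E q,
    surjective_of_add_self_eq_of_eqOn_lt _ fun _ _ q => inv_lowerOfCoords_apply_add_eq E q⟩

/-- the map sending the free entries `x = (x_{ij})_{(i,j)∈E^≺}` of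
`L(x) ∈ 𝓛_G` to the corresponding entries `((L(x)⁻¹)_{ij})_{(i,j)∈E^≺}` of the inverse is a
bijection of `ℝ^{E^≺}`. -/
theorem stmt_8 {m : ℕ} (hm : 0 < m) (E : Finset (Fin m × Fin m))
    (hsymm : ∀ i j : Fin m, (i, j) ∈ E → (j, i) ∈ E)
    (hirr : ∀ i : Fin m, (i, i) ∉ E) :
    Function.Bijective
      (fun x : {p : Fin m × Fin m // p ∈ E ∧ p.2 < p.1} → ℝ =>
        fun q : {p : Fin m × Fin m // p ∈ E ∧ p.2 < p.1} =>
          (lowerOfCoords E x)⁻¹ q.1.1 q.1.2) :=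
  stmt_8_general E
end

section
/- Fix ψ, d₁, d₂ > 0 and define Θ_{ψ,d₁,d₂} := {(L,D) ∈ Θ_G : |L_{ij}| ≤ ψ for all i > j with (i,j) ∈ E, and d₁ ≤ D_{ii} ≤ d₂ for all i}. Let Ũ be an m×m real symmetric positive definite matrix and α̃ ∈ ℝ^m with α̃_i > 2 for all i. Then there exists δ > 0 such that for every (L,D) ∈ Θ_{ψ,d₁,d₂} and every i = 1,…,m: f_IG(D_{ii} | α̃_i/2 − 1, (L⁻¹ Ũ (Lᵀ)⁻¹)_{ii}/2) > δ. -/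
/-!
A unit lower-triangular `L` has determinant one, so the admissible pairs `(L, D)` form a
compact set on which `L ↦ L⁻¹` is continuous. Since `L⁻¹ Ũ (L⁻¹)ᵀ` is again positive
definite, its diagonal entries are positive there, so each density is a continuous positive
function on a compact set and is bounded below by its (positive) minimum.
-/

open Matrix Filter Topology

noncomputable def invGammaPDFReal (a lam x : ℝ) : ℝ :=
  lam ^ a / Real.Gamma a * x ^ (-a - 1) * Real.exp (-lam / x)

lemma invGammaPDFReal_pos {a lam x : ℝ} (ha : 0 < a) (hlam : 0 < lam) (hx : 0 < x) :
    0 < invGammaPDFReal a lam x := by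
  unfold invGammaPDFReal
  have := Real.Gamma_pos_of_pos ha
  positivity

lemma ContinuousOn.invGammaPDFReal {X : Type*} [TopologicalSpace X] {f g : X → ℝ} {s : Set X}
    {a : ℝ} (ha : 0 ≤ a) (hf : ContinuousOn f s) (hg : ContinuousOn g s)
    (hg0 : ∀ x ∈ s, g x ≠ 0) :
    ContinuousOn (fun x ↦ _root_.invGammaPDFReal a (f x) (g x)) s :=
  (((hf.rpow_const fun _ _ ↦ Or.inr ha).div_const _).mul
    (hg.rpow_const fun x hx ↦ Or.inl (hg0 x hx))).mul
    ((hf.neg.div hg hg0).rexp)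

lemma IsCompact.eventually_forall_lt {X : Type*} [TopologicalSpace X] {K : Set X}
    (hK : IsCompact K) {f : X → ℝ} (hf : ContinuousOn f K) (hpos : ∀ x ∈ K, 0 < f x) :
    ∀ᶠ δ in 𝓝 0, ∀ x ∈ K, δ < f x := by
  rcases K.eq_empty_or_nonempty with rfl | hne
  · simp
  obtain ⟨x₀, hx₀, hmin⟩ := hK.exists_isMinOn hne hf
  filter_upwards [eventually_lt_nhds (hpos x₀ hx₀)] with δ hδ x hx using hδ.trans_le (hmin hx)

namespace Matrix

variable {n : Type*}

lemma abs_le_of_unitLowerTriangular [LinearOrder n] {L : Matrix n n ℝ} {R : ℝ} (hR : 1 ≤ R)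
    (hupper : ∀ i j, i < j → L i j = 0) (hdiag : ∀ i, L i i = 1)
    (hlower : ∀ i j, j < i → |L i j| ≤ R) (i j : n) : |L i j| ≤ R := by
  rcases lt_trichotomy i j with hij | rfl | hij
  · rw [hupper i j hij, abs_zero]
    linarith
  · rwa [hdiag, abs_one]
  · exact hlower i j hij

variable [Fintype n] [DecidableEq n]

lemma continuousAt_inv_of_det_ne_zero {K : Type*} [Field K] [TopologicalSpace K]
    [IsTopologicalDivisionRing K] {A : Matrix n n K} (h : A.det ≠ 0) :
    ContinuousAt Inv.inv A :=
  continuousAt_matrix_inv A (by simpa only [Ring.inverse_eq_inv'] using continuousAt_inv₀ h)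

lemma PosDef.inv_mul_mul_transpose_inv_diag_pos {U L : Matrix n n ℝ} (hU : U.PosDef)
    (hL : IsUnit L) (i : n) : 0 < (L⁻¹ * U * (Lᵀ)⁻¹) i i := by
  have hinj : Function.Injective L⁻¹.vecMul :=
    vecMul_injective_iff_isUnit.2 (isUnit_nonsing_inv_iff.2 hL)
  simpa only [transpose_nonsing_inv, conjTranspose_eq_transpose_of_trivial] using
    (hU.mul_mul_conjTranspose_same hinj).diag_pos (i := i)

lemma det_eq_one_of_unitLowerTriangular [LinearOrder n] {R : Type*} [CommRing R]
    {L : Matrix n n R} (hupper : ∀ i j, i < j → L i j = 0) (hdiag : ∀ i, L i i = 1) :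
    L.det = 1 := by
  rw [det_of_isLowerTriangular L hupper]
  simp [hdiag]

lemma isCompact_setOf_det_eq_one_abs_le (R : ℝ) :
    IsCompact {L : Matrix n n ℝ | L.det = 1 ∧ ∀ i j, |L i j| ≤ R} := by
  have hbox : IsCompact (Set.univ.pi fun _ : n ↦ Set.univ.pi fun _ : n ↦ Set.Icc (-R) R) :=
    isCompact_univ_pi fun _ ↦ isCompact_univ_pi fun _ ↦ isCompact_Icc
  refine hbox.of_isClosed_subset ?_ fun L hL j _ k _ ↦ abs_le.1 (hL.2 j k)
  simp only [Set.ofPred_and, Set.ofPred_forall]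
  exact (isClosed_eq continuous_id.matrix_det continuous_const).inter <|
    isClosed_iInter fun j ↦ isClosed_iInter fun k ↦
      isClosed_le (continuous_id.matrix_elem j k).abs continuous_const

lemma continuousOn_inv_mul_mul_transpose_inv (U : Matrix n n ℝ) :
    ContinuousOn (fun L : Matrix n n ℝ ↦ L⁻¹ * U * (Lᵀ)⁻¹) {L | L.det ≠ 0} := by
  refine continuousOn_of_forall_continuousAt fun L hL ↦ ?_
  have hLT : ContinuousAt (fun L : Matrix n n ℝ ↦ (Lᵀ)⁻¹) L :=
    (continuousAt_inv_of_det_ne_zero (by rwa [det_transpose])).comp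
      continuous_id.matrix_transpose.continuousAt
  exact ((continuousAt_inv_of_det_ne_zero hL).mul continuousAt_const).mul hLT

end Matrix

lemma eventually_forall_lt_invGammaPDFReal {n : Type*} [Fintype n] [DecidableEq n]
    {U : Matrix n n ℝ} (hU : U.PosDef) {a : ℝ} (ha : 0 < a) (i : n) (R : ℝ) {d₁ : ℝ}
    (hd₁ : 0 < d₁) (d₂ : ℝ) :
    ∀ᶠ δ in 𝓝 0, ∀ L : Matrix n n ℝ, L.det = 1 → (∀ j k, |L j k| ≤ R) → ∀ x ∈ Set.Icc d₁ d₂,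
      δ < invGammaPDFReal a ((L⁻¹ * U * (Lᵀ)⁻¹) i i / 2) x := by
  set K := {L : Matrix n n ℝ | L.det = 1 ∧ ∀ j k, |L j k| ≤ R} ×ˢ Set.Icc d₁ d₂
  have hK : IsCompact K := (isCompact_setOf_det_eq_one_abs_le R).prod isCompact_Icc
  have hx_pos : ∀ p ∈ K, 0 < p.2 := fun p hp ↦ hd₁.trans_le hp.2.1
  have hQ_pos : ∀ p ∈ K, 0 < (p.1⁻¹ * U * (p.1ᵀ)⁻¹) i i / 2 := fun p hp ↦
    half_pos <| hU.inv_mul_mul_transpose_inv_diag_pos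
      ((isUnit_iff_isUnit_det _).2 (by rw [hp.1.1]; exact isUnit_one)) i
  have hQ_cont : ContinuousOn (fun p : Matrix n n ℝ × ℝ ↦ (p.1⁻¹ * U * (p.1ᵀ)⁻¹) i i / 2) K :=
    ((continuous_id.matrix_elem i i).comp_continuousOn
      ((continuousOn_inv_mul_mul_transpose_inv U).comp continuous_fst.continuousOn
        fun p (hp : p ∈ K) ↦ by simp [hp.1.1])).div_const 2
  have hf := hK.eventually_forall_lt
    (hQ_cont.invGammaPDFReal ha.le continuous_snd.continuousOn fun p hp ↦ (hx_pos p hp).ne')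
    fun p hp ↦ invGammaPDFReal_pos ha (hQ_pos p hp) (hx_pos p hp)
  filter_upwards [hf] with δ hδ L hdet hR x hx using hδ (L, x) ⟨⟨hdet, hR⟩, hx⟩

theorem stmt_10_general {m : ℕ} (E : Finset (Fin m × Fin m))
    (ψ d₁ d₂ : ℝ) (hd₁ : 0 < d₁)
    (Ut : Matrix (Fin m) (Fin m) ℝ) (hUt : Ut.PosDef)
    (αt : Fin m → ℝ) (hαt : ∀ i, 2 < αt i) :
    ∃ δ : ℝ, 0 < δ ∧
      ∀ (L : Matrix (Fin m) (Fin m) ℝ) (d : Fin m → ℝ),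
        (∀ i j : Fin m, i < j → L i j = 0) →
        (∀ i : Fin m, L i i = 1) →
        (∀ i j : Fin m, j < i → (i, j) ∉ E → L i j = 0) →
        (∀ i j : Fin m, j < i → (i, j) ∈ E → |L i j| ≤ ψ) →
        (∀ i : Fin m, d₁ ≤ d i ∧ d i ≤ d₂) →
        ∀ i : Fin m,
          δ < ((L⁻¹ * Ut * (Lᵀ)⁻¹) i i / 2) ^ (αt i / 2 - 1) /
              Real.Gamma (αt i / 2 - 1) *
              (d i) ^ (-(αt i / 2 - 1) - 1) *
              Real.exp (-((L⁻¹ * Ut * (Lᵀ)⁻¹) i i / 2) / d i) := by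
  have hbound : ∀ᶠ δ in 𝓝 0, ∀ i, ∀ L : Matrix (Fin m) (Fin m) ℝ, L.det = 1 →
      (∀ j k, |L j k| ≤ max ψ 1) → ∀ x ∈ Set.Icc d₁ d₂,
        δ < invGammaPDFReal (αt i / 2 - 1) ((L⁻¹ * Ut * (Lᵀ)⁻¹) i i / 2) x :=
    eventually_all.2 fun i ↦
      eventually_forall_lt_invGammaPDFReal hUt (by linarith [hαt i]) i _ hd₁ d₂
  obtain ⟨δ, hδ, hδ_pos⟩ := ((hbound.filter_mono nhdsWithin_le_nhds).and
    (self_mem_nhdsWithin (s := Set.Ioi 0))).exists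
  refine ⟨δ, hδ_pos, fun L d hupper hdiag hzero hedge hd i ↦ ?_⟩
  have hlower : ∀ i j, j < i → |L i j| ≤ max ψ 1 := fun i j hji ↦ by
    by_cases hE : (i, j) ∈ E
    · exact le_max_of_le_left (hedge i j hji hE)
    · rw [hzero i j hji hE, abs_zero]
      exact zero_le_one.trans (le_max_right _ _)
  exact hδ i L (det_eq_one_of_unitLowerTriangular hupper hdiag)
    (abs_le_of_unitLowerTriangular (le_max_right _ _) hupper hdiag hlower) (d i) (hd i)

/-- on the compact set `Θ_{ψ,d₁,d₂}` of pairs `(L,D) ∈ Θ_G` with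
`|L_{ij}| ≤ ψ` (for `i > j`, `(i,j) ∈ E`) and `d₁ ≤ D_{ii} ≤ d₂`, the inverse-gamma
densities `f_IG(D_{ii} | α̃ᵢ/2 − 1, (L⁻¹ Ũ (Lᵀ)⁻¹)_{ii}/2)` are uniformly bounded below
by some `δ > 0`. Here `f_IG(d | a, λ) = λ^a Γ(a)⁻¹ d^{−a−1} e^{−λ/d}`. -/
theorem stmt_10 {m : ℕ} (hm : 0 < m) (E : Finset (Fin m × Fin m))
    (hsymm : ∀ i j : Fin m, (i, j) ∈ E → (j, i) ∈ E)
    (hirr : ∀ i : Fin m, (i, i) ∉ E)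
    (ψ d₁ d₂ : ℝ) (hψ : 0 < ψ) (hd₁ : 0 < d₁) (hd₂ : 0 < d₂)
    (Ut : Matrix (Fin m) (Fin m) ℝ) (hUt : Ut.PosDef)
    (αt : Fin m → ℝ) (hαt : ∀ i, 2 < αt i) :
    ∃ δ : ℝ, 0 < δ ∧
      ∀ (L : Matrix (Fin m) (Fin m) ℝ) (d : Fin m → ℝ),
        (∀ i j : Fin m, i < j → L i j = 0) →
        (∀ i : Fin m, L i i = 1) →
        (∀ i j : Fin m, j < i → (i, j) ∉ E → L i j = 0) →
        (∀ i j : Fin m, j < i → (i, j) ∈ E → |L i j| ≤ ψ) →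
        (∀ i : Fin m, d₁ ≤ d i ∧ d i ≤ d₂) →
        ∀ i : Fin m,
          δ < ((L⁻¹ * Ut * (Lᵀ)⁻¹) i i / 2) ^ (αt i / 2 - 1) /
              Real.Gamma (αt i / 2 - 1) *
              (d i) ^ (-(αt i / 2 - 1) - 1) *
              Real.exp (-((L⁻¹ * Ut * (Lᵀ)⁻¹) i i / 2) / d i) :=
  stmt_10_general E ψ d₁ d₂ hd₁ Ut hUt αt hαt
end

section
/- Let G = (V,E) be a homogeneous graph on V = {1,…,m}. Then there exists a bijection σ : {1,…,m} → {1,…,m} such that, writing G_σ for the graph with edge set E_σ := {(σ(i),σ(j)) : (i,j) ∈ E}, the following two properties hold: (1) for every m×m real positive definite matrix Σ written as Σ = LDLᵀ with L unit lower-triangular and D diagonal with positive diagonal entries, one has [Σ_{ij} = 0 for all i ≠ j with (i,j) ∉ E_σ] if and only if L ∈ 𝓛_{G_σ}; (2) for every m×m real unit lower-triangular matrix L, one has L ∈ 𝓛_{G_σ} if and only if L⁻¹ ∈ 𝓛_{G_σ}. -/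
/-!
Number the vertices by increasing size of their closed neighbourhoods. In a homogeneous graph
the later of two adjacent vertices then has the larger closed neighbourhood, so for `k < j < i`
the edges `i ~ k, j ~ k` force `i ~ j` (a perfect elimination ordering) and the edges
`i ~ j ~ k` force `i ~ k`. The first property gives `(L D Lᵀ)ᵢⱼ = Lᵢⱼ dⱼ` at a non-edge `j < i`
as soon as the columns of `L` before `j` have the zero pattern, and induction over the columns
yields (1). The second makes the zero pattern survive the recursion `L⁻¹ L = 1` that computes
`L⁻¹` column by column from the right, which yields (2).
-/

open Matrix

def closedNbhd {V : Type*} (r : V → V → Prop) (v : V) : Set V := {v} ∪ {u | r u v}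

def IsHomogeneous {V : Type*} (r : V → V → Prop) : Prop :=
  ∀ i j, r i j → closedNbhd r j ⊆ closedNbhd r i ∨ closedNbhd r i ⊆ closedNbhd r j

lemma closedNbhd_comp_equiv {V W : Type*} (r : V → V → Prop) (τ : W ≃ V) (w : W) :
    closedNbhd (fun a b => r (τ a) (τ b)) w = τ ⁻¹' closedNbhd r (τ w) := by
  ext u
  simp [closedNbhd, τ.injective.eq_iff]

section Ordering

variable {ι : Type*} [LinearOrder ι]

def IsPerfectEliminationOrder (e : ι → ι → Prop) : Prop :=
  ∀ ⦃i j k⦄, k < j → j < i → e i k → e j k → e i j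

def IsClosedUnderDescendingPaths (e : ι → ι → Prop) : Prop :=
  ∀ ⦃i j k⦄, k < j → j < i → e i j → e j k → e i k

variable {r : ι → ι → Prop}

lemma isPerfectEliminationOrder_of_closedNbhd_mono (hr : ∀ ⦃a b⦄, r a b → r b a)
    (hmono : ∀ ⦃i j⦄, j < i → r i j → closedNbhd r j ⊆ closedNbhd r i) :
    IsPerfectEliminationOrder r := by
  intro i j k hkj hji hik hjk
  rcases hmono (hkj.trans hji) hik (Or.inr hjk) with hji' | hji'
  · exact absurd hji' hji.ne
  · exact hr hji'

lemma isClosedUnderDescendingPaths_of_closedNbhd_mono (hr : ∀ ⦃a b⦄, r a b → r b a)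
    (hmono : ∀ ⦃i j⦄, j < i → r i j → closedNbhd r j ⊆ closedNbhd r i) :
    IsClosedUnderDescendingPaths r := by
  intro i j k hkj hji hij hjk
  rcases hmono hji hij (Or.inr (hr hjk)) with hki | hki
  · exact absurd hki (hkj.trans hji).ne
  · exact hr hki

end Ordering

lemma exists_perm_closedNbhd_mono {m : ℕ} (r : Fin m → Fin m → Prop)
    (hhom : IsHomogeneous r) :
    ∃ τ : Equiv.Perm (Fin m), ∀ ⦃i j⦄, j < i → r (τ i) (τ j) →
      closedNbhd (fun a b => r (τ a) (τ b)) j ⊆ closedNbhd (fun a b => r (τ a) (τ b)) i := by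
  refine ⟨Tuple.sort fun v => (closedNbhd r v).ncard, fun i j hji hij => ?_⟩
  simp only [closedNbhd_comp_equiv]
  refine Set.preimage_mono ?_
  rcases hhom _ _ hij with h | h
  · exact h
  · exact (Set.eq_of_subset_of_ncard_le h
      (Tuple.monotone_sort (fun v => (closedNbhd r v).ncard) hji.le) (Set.toFinite _)).ge

theorem exists_perm_isPerfectEliminationOrder_of_homogeneous {m : ℕ} (r : Fin m → Fin m → Prop)
    (hr : ∀ ⦃a b⦄, r a b → r b a)
    (hhom : IsHomogeneous r) :
    ∃ τ : Equiv.Perm (Fin m), IsPerfectEliminationOrder (fun a b => r (τ a) (τ b)) ∧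
      IsClosedUnderDescendingPaths (fun a b => r (τ a) (τ b)) := by
  obtain ⟨τ, hmono⟩ := exists_perm_closedNbhd_mono r hhom
  have hr' : ∀ ⦃a b⦄, r (τ a) (τ b) → r (τ b) (τ a) := fun _ _ h => hr h
  exact ⟨τ, isPerfectEliminationOrder_of_closedNbhd_mono hr' hmono,
    isClosedUnderDescendingPaths_of_closedNbhd_mono hr' hmono⟩

namespace Matrix

variable {ι : Type*} [LinearOrder ι] {e : ι → ι → Prop}

/-- For unit lower triangular `L` and `e` the adjacency of `G`, this is `L ∈ 𝓛_G`. -/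
def IsLowerSupportedOn {R : Type*} [Zero R] (e : ι → ι → Prop) (L : Matrix ι ι R) : Prop :=
  ∀ i j, j < i → ¬ e i j → L i j = 0

lemma forall_ne_iff_forall_lt_of_isSymm {α : Type*} [Zero α] {S : Matrix ι ι α} (hS : S.IsSymm)
    (he : ∀ ⦃i j⦄, e i j → e j i) :
    (∀ i j, i ≠ j → ¬ e i j → S i j = 0) ↔ ∀ i j, j < i → ¬ e i j → S i j = 0 := by
  refine ⟨fun h i j hji hij => h i j hji.ne' hij, fun h i j hne hij => ?_⟩
  rcases hne.lt_or_gt with hlt | hgt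
  · rw [← hS.apply]
    exact h j i hlt fun hji => hij (he hji)
  · exact h i j hgt hij

variable {R : Type*} [Fintype ι] [CommRing R] {L : Matrix ι ι R}

lemma mul_apply_self_of_isLowerTriangular {A B : Matrix ι ι R} (hA : A.IsLowerTriangular)
    (hB : B.IsLowerTriangular) (i : ι) : (A * B) i i = A i i * B i i := by
  rw [mul_apply, Finset.sum_eq_single i]
  · intro k _ hki
    rcases hki.lt_or_gt with hk | hk
    · rw [hB hk, mul_zero]
    · rw [hA hk, zero_mul]
  · simp

lemma isUnit_det_of_isLowerTriangular (hL : L.IsLowerTriangular) (hdiag : ∀ i, L i i = 1) :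
    IsUnit L.det := by
  simp [det_of_isLowerTriangular L hL, hdiag]

lemma IsLowerTriangular.inv_s11 (hL : L.IsLowerTriangular) (hdiag : ∀ i, L i i = 1) :
    L⁻¹.IsLowerTriangular :=
  have := L.invertibleOfIsUnitDet (isUnit_det_of_isLowerTriangular hL hdiag)
  blockTriangular_inv_of_blockTriangular hL

lemma inv_apply_self_of_isLowerTriangular (hL : L.IsLowerTriangular) (hdiag : ∀ i, L i i = 1)
    (i : ι) : L⁻¹ i i = 1 := by
  have h := congr_fun₂ (nonsing_inv_mul L (isUnit_det_of_isLowerTriangular hL hdiag)) i i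
  rwa [mul_apply_self_of_isLowerTriangular (hL.inv_s11 hdiag) hL, hdiag, mul_one, one_apply_eq] at h

lemma mul_diagonal_mul_transpose_apply (L : Matrix ι ι R) (d : ι → R) (i j : ι) :
    (L * diagonal d * Lᵀ) i j = ∑ k, L i k * d k * L j k := by
  rw [mul_apply]
  simp_rw [mul_diagonal, transpose_apply]

lemma isSymm_mul_diagonal_mul_transpose (L : Matrix ι ι R) (d : ι → R) :
    (L * diagonal d * Lᵀ).IsSymm := by
  rw [IsSymm, transpose_mul, transpose_mul, transpose_transpose, diagonal_transpose,
    Matrix.mul_assoc]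

lemma mul_diagonal_mul_transpose_apply_of_not_rel (he : IsPerfectEliminationOrder e)
    (hL : L.IsLowerTriangular) (hdiag : ∀ i, L i i = 1) (d : ι → R) {i j : ι} (hji : j < i)
    (hij : ¬ e i j) (hcols : ∀ k < j, ∀ i', k < i' → ¬ e i' k → L i' k = 0) :
    (L * diagonal d * Lᵀ) i j = L i j * d j := by
  rw [mul_diagonal_mul_transpose_apply, Finset.sum_eq_single j]
  · rw [hdiag, mul_one]
  · intro k _ hkj
    rcases hkj.lt_or_gt with hk | hk
    · by_cases hik : e i k
      · have hjk : ¬ e j k := fun hjk => hij (he hk hji hik hjk)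
        rw [hcols k hk j hk hjk, mul_zero]
      · rw [hcols k hk i (hk.trans hji) hik, zero_mul, zero_mul]
    · rw [hL hk, mul_zero]
  · simp

theorem isLowerSupportedOn_iff_mul_diagonal_mul_transpose [NoZeroDivisors R]
    (he : IsPerfectEliminationOrder e) (hL : L.IsLowerTriangular) (hdiag : ∀ i, L i i = 1)
    {d : ι → R} (hd : ∀ i, d i ≠ 0) :
    IsLowerSupportedOn e L ↔ ∀ i j, j < i → ¬ e i j → (L * diagonal d * Lᵀ) i j = 0 := by
  refine ⟨fun hLe i j hji hij => ?_, fun hS => ?_⟩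
  · rw [mul_diagonal_mul_transpose_apply_of_not_rel he hL hdiag d hji hij fun k _ i' => hLe i' k,
      hLe i j hji hij, zero_mul]
  · suffices ∀ j i, j < i → ¬ e i j → L i j = 0 from fun i j => this j i
    intro j
    induction j using WellFoundedLT.induction with | ind j ih
    intro i hji hij
    have h := hS i j hji hij
    rw [mul_diagonal_mul_transpose_apply_of_not_rel he hL hdiag d hji hij ih] at h
    exact (mul_eq_zero.1 h).resolve_right (hd j)

lemma IsLowerSupportedOn.inv_s11 (he : IsClosedUnderDescendingPaths e) (hL : L.IsLowerTriangular)
    (hdiag : ∀ i, L i i = 1) (h : IsLowerSupportedOn e L) : IsLowerSupportedOn e L⁻¹ := by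
  have hinv := nonsing_inv_mul L (isUnit_det_of_isLowerTriangular hL hdiag)
  have hLinv := hL.inv_s11 hdiag
  suffices ∀ j i, j < i → ¬ e i j → L⁻¹ i j = 0 from fun i j => this j i
  intro j
  induction j using WellFoundedGT.induction with | ind j ih
  intro i hji hij
  have h0 := congr_fun₂ hinv i j
  rwa [one_apply_ne hji.ne', mul_apply, Finset.sum_eq_single j, hdiag, mul_one] at h0
  · intro k _ hkj
    rcases hkj.lt_or_gt with hk | hk
    · rw [hL hk, mul_zero]
    · rcases lt_trichotomy k i with hki | rfl | hik
      · by_cases hek : e i k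
        · rw [h k j hk fun hkj => hij (he hk hki hek hkj), mul_zero]
        · rw [ih k hk i hki hek, zero_mul]
      · rw [h k j hk hij, mul_zero]
      · rw [hLinv hik, zero_mul]
  · simp

theorem isLowerSupportedOn_inv_iff (he : IsClosedUnderDescendingPaths e)
    (hL : L.IsLowerTriangular) (hdiag : ∀ i, L i i = 1) :
    IsLowerSupportedOn e L ↔ IsLowerSupportedOn e L⁻¹ := by
  refine ⟨IsLowerSupportedOn.inv_s11 he hL hdiag, fun h => ?_⟩
  rw [← nonsing_inv_nonsing_inv L (isUnit_det_of_isLowerTriangular hL hdiag)]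
  exact h.inv_s11 he (hL.inv_s11 hdiag) (inv_apply_self_of_isLowerTriangular hL hdiag)

end Matrix

theorem stmt_11_general {m : ℕ} (E : Finset (Fin m × Fin m))
    (hsymm : ∀ i j : Fin m, (i, j) ∈ E → (j, i) ∈ E)
    (hhom : ∀ i j : Fin m, (i, j) ∈ E →
      (({j} ∪ {u : Fin m | (u, j) ∈ E} : Set (Fin m)) ⊆
          ({i} ∪ {u : Fin m | (u, i) ∈ E} : Set (Fin m))) ∨
      (({i} ∪ {u : Fin m | (u, i) ∈ E} : Set (Fin m)) ⊆
          ({j} ∪ {u : Fin m | (u, j) ∈ E} : Set (Fin m)))) :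
    ∃ σ : Equiv.Perm (Fin m),
      (∀ (L : Matrix (Fin m) (Fin m) ℝ) (d : Fin m → ℝ),
        (∀ i j : Fin m, i < j → L i j = 0) →
        (∀ i : Fin m, L i i = 1) →
        (∀ i : Fin m, 0 < d i) →
        ((∀ i j : Fin m, i ≠ j → (σ.symm i, σ.symm j) ∉ E →
            (L * Matrix.diagonal d * Lᵀ) i j = 0) ↔
          (∀ i j : Fin m, j < i → (σ.symm i, σ.symm j) ∉ E → L i j = 0))) ∧
      (∀ L : Matrix (Fin m) (Fin m) ℝ,
        (∀ i j : Fin m, i < j → L i j = 0) →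
        (∀ i : Fin m, L i i = 1) →
        ((∀ i j : Fin m, j < i → (σ.symm i, σ.symm j) ∉ E → L i j = 0) ↔
          (∀ i j : Fin m, j < i → (σ.symm i, σ.symm j) ∉ E → L⁻¹ i j = 0))) := by
  obtain ⟨τ, hpeo, hdesc⟩ := exists_perm_isPerfectEliminationOrder_of_homogeneous
    (fun u v => (u, v) ∈ E) (fun u v => hsymm u v) hhom
  refine ⟨τ.symm, fun L d hlow hdiag hd => ?_, fun L hlow hdiag => ?_⟩
  all_goals simp only [Equiv.symm_symm]
  · rw [forall_ne_iff_forall_lt_of_isSymm (isSymm_mul_diagonal_mul_transpose L d)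
      fun i j => hsymm (τ i) (τ j)]
    exact (isLowerSupportedOn_iff_mul_diagonal_mul_transpose hpeo (fun i j h => hlow i j h) hdiag
      fun i => (hd i).ne').symm
  · exact isLowerSupportedOn_inv_iff hdesc (fun i j h => hlow i j h) hdiag

/-- for a homogeneous graph `G = (V,E)` on `{1,…,m}` there is a relabelling
`σ` of the vertices such that, for the relabelled graph `G_σ` (with `(i,j)` an edge of `G_σ`
iff `(σ⁻¹ i, σ⁻¹ j) ∈ E`): (1) a positive definite `Σ = L D Lᵀ` (modified Cholesky
decomposition) satisfies the zero pattern of `G_σ` iff `L ∈ 𝓛_{G_σ}`; and (2) a unit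
lower-triangular `L` lies in `𝓛_{G_σ}` iff `L⁻¹` does. -/
theorem stmt_11 {m : ℕ} (hm : 0 < m) (E : Finset (Fin m × Fin m))
    (hsymm : ∀ i j : Fin m, (i, j) ∈ E → (j, i) ∈ E)
    (hirr : ∀ i : Fin m, (i, i) ∉ E)
    (hhom : ∀ i j : Fin m, (i, j) ∈ E →
      (({j} ∪ {u : Fin m | (u, j) ∈ E} : Set (Fin m)) ⊆
          ({i} ∪ {u : Fin m | (u, i) ∈ E} : Set (Fin m))) ∨
      (({i} ∪ {u : Fin m | (u, i) ∈ E} : Set (Fin m)) ⊆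
          ({j} ∪ {u : Fin m | (u, j) ∈ E} : Set (Fin m)))) :
    ∃ σ : Equiv.Perm (Fin m),
      (∀ (L : Matrix (Fin m) (Fin m) ℝ) (d : Fin m → ℝ),
        (∀ i j : Fin m, i < j → L i j = 0) →
        (∀ i : Fin m, L i i = 1) →
        (∀ i : Fin m, 0 < d i) →
        ((∀ i j : Fin m, i ≠ j → (σ.symm i, σ.symm j) ∉ E →
            (L * Matrix.diagonal d * Lᵀ) i j = 0) ↔
          (∀ i j : Fin m, j < i → (σ.symm i, σ.symm j) ∉ E → L i j = 0))) ∧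
      (∀ L : Matrix (Fin m) (Fin m) ℝ,
        (∀ i j : Fin m, i < j → L i j = 0) →
        (∀ i : Fin m, L i i = 1) →
        ((∀ i j : Fin m, j < i → (σ.symm i, σ.symm j) ∉ E → L i j = 0) ↔
          (∀ i j : Fin m, j < i → (σ.symm i, σ.symm j) ∉ E → L⁻¹ i j = 0))) :=
  stmt_11_general E hsymm hhom
end

section
/- Let L be an m×m real unit lower-triangular matrix, D an m×m diagonal matrix with all D_{ii} > 0, and Σ := LDLᵀ. Fix i ∈ {1,…,m} and a nonempty subset A ⊆ {1,…,i−1}, and suppose that (L⁻¹)_{ij} = 0 for every j < i with j ∉ A. Then, with Σ_{A,A} := (Σ_{kl})_{k,l∈A} (which is invertible) and Σ_{A,i} := (Σ_{ki})_{k∈A}: (a) the row vector ((L⁻¹)_{ik})_{k∈A} equals −((Σ_{A,A})⁻¹ Σ_{A,i})ᵀ; and (b) D_{ii} = Σ_{ii} − Σ_{A,i}ᵀ (Σ_{A,A})⁻¹ Σ_{A,i}. -/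
open Matrix

/-! Row `i` of `L⁻¹` is a vector `w` with `w i = 1`, supported on `A ∪ {i}` by hypothesis and
triangularity, and `w ᵥ* Σ` is row `i` of the upper-triangular `L⁻¹ Σ = D Lᵀ`. So `w ᵥ* Σ`
vanishes on `A`, which are the normal equations `Σ_{A,A} w_A = -Σ_{A,i}`, and its `i`-th entry
`D_{ii}` is the Schur complement once `w_A` is substituted. -/

namespace Matrix

variable {n K : Type*} [Fintype n]

section Regression

variable [DecidableEq n] [CommRing K] {S : Matrix n n K} {A : Finset n} {i : n} {w : n → K}

lemma vecMul_apply_eq_add_sum_of_support (hiA : i ∉ A) (hwi : w i = 1)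
    (hw : ∀ j, j ≠ i → j ∉ A → w j = 0) (j : n) :
    (w ᵥ* S) j = S i j + ∑ k : A, w k * S k j := by
  have hsupp : ∑ k ∈ insert i A, w k * S k j = ∑ k, w k * S k j := by
    refine Finset.sum_subset (Finset.subset_univ _) fun k _ hk => ?_
    rw [Finset.mem_insert, not_or] at hk
    rw [hw k hk.1 hk.2, zero_mul]
  calc (w ᵥ* S) j = ∑ k, w k * S k j := rfl
    _ = ∑ k ∈ insert i A, w k * S k j := hsupp.symm
    _ = _ := by
      rw [Finset.sum_insert hiA, hwi, one_mul, Finset.sum_coe_sort A fun k => w k * S k j]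

lemma eq_neg_inv_mulVec_of_vecMul_eq_zero (hS : S.IsSymm) (hiA : i ∉ A) (hwi : w i = 1)
    (hw : ∀ j, j ≠ i → j ∉ A → w j = 0) (hSA : IsUnit (S.submatrix ((↑) : A → n) (↑)).det)
    (hperp : ∀ j ∈ A, (w ᵥ* S) j = 0) :
    (fun k : A => w k) = -((S.submatrix ((↑) : A → n) (↑))⁻¹ *ᵥ fun k : A => S k i) := by
  have hnormal : S.submatrix (↑) (↑) *ᵥ (fun k : A => w k) = -fun k : A => S k i := by
    funext j
    have hj := hperp j j.2
    rw [vecMul_apply_eq_add_sum_of_support hiA hwi hw] at hj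
    simp only [mulVec, dotProduct, submatrix_apply, Pi.neg_apply, hS.apply i j]
    rw [eq_neg_iff_add_eq_zero, add_comm, ← hj]
    exact congrArg _ (Finset.sum_congr rfl fun k _ => by rw [hS.apply k j, mul_comm])
  rw [← neg_neg (fun k : A => S k i), ← hnormal, mulVec_neg, neg_neg, mulVec_mulVec,
    nonsing_inv_mul _ hSA, one_mulVec]

lemma vecMul_apply_self_eq_sub_dotProduct (hS : S.IsSymm) (hiA : i ∉ A) (hwi : w i = 1)
    (hw : ∀ j, j ≠ i → j ∉ A → w j = 0) (hSA : IsUnit (S.submatrix ((↑) : A → n) (↑)).det)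
    (hperp : ∀ j ∈ A, (w ᵥ* S) j = 0) :
    (w ᵥ* S) i = S i i - (fun k : A => S k i) ⬝ᵥ
      ((S.submatrix ((↑) : A → n) (↑))⁻¹ *ᵥ fun k : A => S k i) := by
  have hwA := eq_neg_inv_mulVec_of_vecMul_eq_zero hS hiA hwi hw hSA hperp
  calc (w ᵥ* S) i = S i i + (fun k : A => w k) ⬝ᵥ fun k : A => S k i :=
        vecMul_apply_eq_add_sum_of_support hiA hwi hw i
    _ = _ := by rw [hwA, neg_dotProduct, dotProduct_comm, sub_eq_add_neg]

end Regression

section Triangular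

variable [LinearOrder n] [CommRing K]

lemma IsLowerTriangular.mul_apply_self {M N : Matrix n n K} (hM : M.IsLowerTriangular)
    (hN : N.IsLowerTriangular) (i : n) : (M * N) i i = M i i * N i i := by
  refine (mul_apply).trans (Fintype.sum_eq_single i fun k hk => ?_)
  rcases hk.lt_or_gt with hki | hik
  · rw [hN hki, mul_zero]
  · rw [hM hik, zero_mul]

lemma IsLowerTriangular.inv_apply_self_mul_apply_self [DecidableEq n] {M : Matrix n n K}
    (hM : M.IsLowerTriangular) (hdet : IsUnit M.det) (i : n) : M⁻¹ i i * M i i = 1 := by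
  have := M.invertibleOfIsUnitDet hdet
  rw [← IsLowerTriangular.mul_apply_self (blockTriangular_inv_of_blockTriangular hM) hM,
    nonsing_inv_mul _ hdet, one_apply_eq]

end Triangular

lemma posDef_mul_diagonal_mul_transpose [DecidableEq n] {L : Matrix n n ℝ} (hL : IsUnit L.det)
    {d : n → ℝ} (hd : ∀ i, 0 < d i) : (L * diagonal d * Lᵀ).PosDef := by
  rw [← conjTranspose_eq_transpose_of_trivial, ← star_eq_conjTranspose,
    ((isUnit_iff_isUnit_det L).mpr hL).posDef_star_right_conjugate_iff]
  exact posDef_diagonal_iff.mpr hd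

end Matrix

theorem stmt_12_general {m : ℕ} (L : Matrix (Fin m) (Fin m) ℝ)
    (hlow : ∀ i j : Fin m, i < j → L i j = 0)
    (hdiag : ∀ i : Fin m, L i i = 1)
    (d : Fin m → ℝ) (hd : ∀ i, 0 < d i)
    (i : Fin m) (A : Finset (Fin m)) (hAi : ∀ j ∈ A, j < i)
    (hzero : ∀ j : Fin m, j < i → j ∉ A → L⁻¹ i j = 0) :
    IsUnit (Matrix.of fun k l : A =>
        (L * Matrix.diagonal d * Lᵀ) (k : Fin m) (l : Fin m)).det ∧
    (∀ k : A,
      L⁻¹ i (k : Fin m) =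
        -(((Matrix.of fun k l : A =>
              (L * Matrix.diagonal d * Lᵀ) (k : Fin m) (l : Fin m))⁻¹ *ᵥ
            fun k : A => (L * Matrix.diagonal d * Lᵀ) (k : Fin m) i) k)) ∧
    d i = (L * Matrix.diagonal d * Lᵀ) i i -
      (fun k : A => (L * Matrix.diagonal d * Lᵀ) (k : Fin m) i) ⬝ᵥ
        ((Matrix.of fun k l : A =>
            (L * Matrix.diagonal d * Lᵀ) (k : Fin m) (l : Fin m))⁻¹ *ᵥ
          fun k : A => (L * Matrix.diagonal d * Lᵀ) (k : Fin m) i) := by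
  set Sg := L * diagonal d * Lᵀ
  have hL : L.IsLowerTriangular := fun a b hab => hlow a b hab
  have hdet : IsUnit L.det := by simp [det_of_isLowerTriangular L hL, hdiag]
  have hSg : Sg.PosDef := posDef_mul_diagonal_mul_transpose hdet hd
  have hSA : IsUnit (Sg.submatrix ((↑) : A → Fin m) (↑)).det :=
    (hSg.submatrix Subtype.val_injective).det_pos.ne'.isUnit
  have hrow : ∀ j, (L⁻¹ i ᵥ* Sg) j = d i * L j i := fun j => by
    rw [← mul_apply_eq_vecMul, ← Matrix.mul_assoc, ← Matrix.mul_assoc, nonsing_inv_mul _ hdet,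
      Matrix.one_mul, diagonal_mul, transpose_apply]
  have hwi : L⁻¹ i i = 1 := by
    simpa [hdiag] using hL.inv_apply_self_mul_apply_self hdet i
  have hw : ∀ j, j ≠ i → j ∉ A → L⁻¹ i j = 0 := fun j hji hjA => by
    have := L.invertibleOfIsUnitDet hdet
    rcases hji.lt_or_gt with hj | hj
    · exact hzero j hj hjA
    · exact blockTriangular_inv_of_blockTriangular hL hj
  have hiA : i ∉ A := fun hi => (hAi i hi).false
  have hperp : ∀ j ∈ A, (L⁻¹ i ᵥ* Sg) j = 0 := fun j hj => by
    rw [hrow, hlow j i (hAi j hj), mul_zero]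
  have hsymm : Sg.IsSymm := hSg.isHermitian
  refine ⟨hSA, congrFun (eq_neg_inv_mulVec_of_vecMul_eq_zero hsymm hiA hwi hw hSA hperp), ?_⟩
  have hschur := vecMul_apply_self_eq_sub_dotProduct hsymm hiA hwi hw hSA hperp
  rwa [hrow, hdiag, mul_one] at hschur

/-- let `Σ = L D Lᵀ` with `L` unit lower-triangular and `D` diagonal positive.
Fix `i` and a nonempty `A ⊆ {1,…,i−1}`, and assume `(L⁻¹)_{ij} = 0` for every `j < i` with
`j ∉ A`. Then `Σ_{A,A}` is invertible, the row `((L⁻¹)_{ik})_{k∈A}` equals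
`−((Σ_{A,A})⁻¹ Σ_{A,i})ᵀ`, and `D_{ii} = Σ_{ii} − Σ_{A,i}ᵀ (Σ_{A,A})⁻¹ Σ_{A,i}`. -/
theorem stmt_12 {m : ℕ} (hm : 0 < m) (L : Matrix (Fin m) (Fin m) ℝ)
    (hlow : ∀ i j : Fin m, i < j → L i j = 0)
    (hdiag : ∀ i : Fin m, L i i = 1)
    (d : Fin m → ℝ) (hd : ∀ i, 0 < d i)
    (i : Fin m) (A : Finset (Fin m)) (hA : A.Nonempty) (hAi : ∀ j ∈ A, j < i)
    (hzero : ∀ j : Fin m, j < i → j ∉ A → L⁻¹ i j = 0) :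
    IsUnit (Matrix.of fun k l : A =>
        (L * Matrix.diagonal d * Lᵀ) (k : Fin m) (l : Fin m)).det ∧
    (∀ k : A,
      L⁻¹ i (k : Fin m) =
        -(((Matrix.of fun k l : A =>
              (L * Matrix.diagonal d * Lᵀ) (k : Fin m) (l : Fin m))⁻¹ *ᵥ
            fun k : A => (L * Matrix.diagonal d * Lᵀ) (k : Fin m) i) k)) ∧
    d i = (L * Matrix.diagonal d * Lᵀ) i i -
      (fun k : A => (L * Matrix.diagonal d * Lᵀ) (k : Fin m) i) ⬝ᵥ
        ((Matrix.of fun k l : A =>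
            (L * Matrix.diagonal d * Lᵀ) (k : Fin m) (l : Fin m))⁻¹ *ᵥ
          fun k : A => (L * Matrix.diagonal d * Lᵀ) (k : Fin m) i) :=
  stmt_12_general L hlow hdiag d hd i A hAi hzero
end
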